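/- Let 0 < α < 1, T > 0, N a positive integer, and r ≥ 1, and let p^{(n)}_{n−i} be the coefficients built from the L1 weights on the graded mesh t_n = T(n/N)^r. Then all these coefficients are nonnegative: p^{(n)}_{n−i} ≥ 0 for every 1 ≤ i ≤ n ≤ N. -/

import Mathlib

/-!
The L1 weight `d_{n,k}` is the slope of the concave function `s ↦ s^{1-α}` over
`[t_n - t_{n-k+1}, t_n - t_{n-k}]`; these intervals move to the right as `k` grows, so the weights
decrease in `k`. Hence every difference `b^{(k)}_{k-i-1} - b^{(k)}_{k-i}` in the recursion for the
`p^{(n)}_{n-i}` is nonnegative, and nonnegativity propagates by strong induction from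
`p^{(n)}_0 = Γ(2-α) τ_n^α ≥ 0`.
-/

noncomputable section

/-- The graded mesh `t_n = T (n/N)^r` on `[0,T]`. -/
def gmesh (T r : ℝ) (N n : ℕ) : ℝ := T * ((n : ℝ) / (N : ℝ)) ^ r

/-- The step sizes `τ_n = t_n - t_{n-1}` of the graded mesh. -/
def gstep (T r : ℝ) (N n : ℕ) : ℝ := gmesh T r N n - gmesh T r N (n - 1)

/-- The L1 weights
`d_{n,k} = ((t_n − t_{n−k})^{1−α} − (t_n − t_{n−k+1})^{1−α})/τ_{n−k+1}`. -/
def L1w (α T r : ℝ) (N n k : ℕ) : ℝ :=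
  ((gmesh T r N n - gmesh T r N (n - k)) ^ (1 - α)
      - (gmesh T r N n - gmesh T r N (n - k + 1)) ^ (1 - α)) / gstep T r N (n - k + 1)

/-- The coefficients `b^{(n)}_{n−i} = d_{n,n−i+1}/Γ(2−α)`; here `bcoef α T r N n i`
denotes `b^{(n)}_{n-i}`. -/
def bcoef (α T r : ℝ) (N n i : ℕ) : ℝ := L1w α T r N n (n - i + 1) / Real.Gamma (2 - α)

/-- Auxiliary definition: `pcoefAux α T r N n m` is the coefficient `p^{(n)}_m`,
defined by `p^{(n)}_0 = Γ(2−α) τ_n^α` and, for `m = n - i` with `1 ≤ i ≤ n−1`,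
`p^{(n)}_{n−i} = Γ(2−α) τ_i^α Σ_{k=i+1}^{n} (b^{(k)}_{k−i−1} − b^{(k)}_{k−i}) p^{(n)}_{n−k}`
(the sum over `k ∈ [i+1, n]` is re-indexed by `j = n - k ∈ [0, n-i-1]`). -/
def pcoefAux (α T r : ℝ) (N n : ℕ) : ℕ → ℝ
  | 0 => Real.Gamma (2 - α) * (gstep T r N n) ^ α
  | (m + 1) =>
      Real.Gamma (2 - α) * (gstep T r N (n - (m + 1))) ^ α *
        ∑ j ∈ (Finset.range (m + 1)).attach,
          (bcoef α T r N (n - j.1) (n - m) - bcoef α T r N (n - j.1) (n - (m + 1))) *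
            pcoefAux α T r N n j.1
  decreasing_by
    have := j.2
    simp only [Finset.mem_range] at this
    omega

/-- `pcoef α T r N n i` is the coefficient `p^{(n)}_{n−i}` for `1 ≤ i ≤ n`. -/
def pcoef (α T r : ℝ) (N n i : ℕ) : ℝ := pcoefAux α T r N n (n - i)

open Set

theorem ConcaveOn.slope_sub_le_slope_sub {f : ℝ → ℝ} (hf : ConcaveOn ℝ (Ici 0) f)
    {a b c d : ℝ} (hab : a < b) (hbc : b < c) (hcd : c ≤ d) :
    (f (d - a) - f (d - b)) / (b - a) ≤ (f (d - b) - f (d - c)) / (c - b) := by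
  have h := hf.slope_anti_adjacent (x := d - c) (y := d - b) (z := d - a)
    (mem_Ici.2 (sub_nonneg.2 hcd)) (mem_Ici.2 (by linarith)) (by linarith) (by linarith)
  rwa [sub_sub_sub_cancel_left, sub_sub_sub_cancel_left] at h

theorem gmesh_strictMono {T r : ℝ} {N : ℕ} (hT : 0 < T) (hr : 0 < r) (hN : 0 < N) :
    StrictMono (gmesh T r N) := by
  intro a b hab
  have hN' : (0 : ℝ) < N := Nat.cast_pos.2 hN
  unfold gmesh
  gcongr

section StrictMonoMesh

variable {α T r : ℝ} {N : ℕ}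

theorem gstep_nonneg (hmesh : Monotone (gmesh T r N)) (n : ℕ) : 0 ≤ gstep T r N n :=
  sub_nonneg.2 (hmesh (Nat.sub_le n 1))

theorem L1w_succ_le (hα0 : 0 < α) (hα1 : α < 1) (hmesh : StrictMono (gmesh T r N))
    {k κ : ℕ} (hκ : 1 ≤ κ) : L1w α T r N k (κ + 1) ≤ L1w α T r N k κ := by
  rcases Nat.lt_or_ge k (κ + 1) with hk | hk
  · -- both indices reach past `t_0`, and truncated subtraction makes the weights coincide
    unfold L1w
    rw [Nat.sub_eq_zero_of_le hk.le, Nat.sub_eq_zero_of_le (by omega : k ≤ κ)]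
  obtain ⟨j, rfl⟩ := Nat.exists_eq_add_of_le hk
  have hconc := Real.concaveOn_rpow (by linarith : (0 : ℝ) ≤ 1 - α) (by linarith)
  unfold L1w gstep
  rw [show κ + 1 + j - (κ + 1) = j by omega, show κ + 1 + j - κ = j + 1 by omega,
    show j + 1 - 1 = j by omega, show j + 1 + 1 - 1 = j + 1 by omega]
  exact hconc.slope_sub_le_slope_sub (hmesh (by omega)) (hmesh (by omega))
    (hmesh.monotone (by omega))

theorem L1w_antitoneOn (hα0 : 0 < α) (hα1 : α < 1) (hmesh : StrictMono (gmesh T r N))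
    (k : ℕ) : AntitoneOn (L1w α T r N k) (Ici 1) :=
  antitoneOn_nat_Ici_of_succ_le fun _ hκ => L1w_succ_le hα0 hα1 hmesh hκ

theorem bcoef_monotone (hα0 : 0 < α) (hα1 : α < 1) (hmesh : StrictMono (gmesh T r N))
    (k : ℕ) : Monotone (bcoef α T r N k) := by
  intro i i' hii'
  have hΓ : 0 < Real.Gamma (2 - α) := Real.Gamma_pos_of_pos (by linarith)
  unfold bcoef
  gcongr
  exact L1w_antitoneOn hα0 hα1 hmesh k (mem_Ici.2 (by omega)) (mem_Ici.2 (by omega))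
    (by omega)

theorem pcoefAux_nonneg (hα0 : 0 < α) (hα1 : α < 1) (hmesh : StrictMono (gmesh T r N))
    (n m : ℕ) : 0 ≤ pcoefAux α T r N n m := by
  have hΓ : 0 < Real.Gamma (2 - α) := Real.Gamma_pos_of_pos (by linarith)
  induction m using Nat.strong_induction_on with
  | _ m ih =>
    cases m with
    | zero =>
      rw [pcoefAux]
      exact mul_nonneg hΓ.le (Real.rpow_nonneg (gstep_nonneg hmesh.monotone n) α)
    | succ m =>
      rw [pcoefAux]
      refine mul_nonneg (mul_nonneg hΓ.le (Real.rpow_nonneg (gstep_nonneg hmesh.monotone _) α))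
        (Finset.sum_nonneg fun j _ => mul_nonneg ?_ (ih j.1 ?_))
      · exact sub_nonneg.2 (bcoef_monotone hα0 hα1 hmesh _ (by omega))
      · exact Finset.mem_range.1 j.2

end StrictMonoMesh

theorem pcoef_nonneg_general
    (α T r : ℝ) (N : ℕ) (hα0 : 0 < α) (hα1 : α < 1) (hT : 0 < T) (hr : 1 ≤ r) (hN : 0 < N)
    (n i : ℕ) :
    0 ≤ pcoef α T r N n i :=
  pcoefAux_nonneg hα0 hα1 (gmesh_strictMono hT (by linarith) hN) n (n - i)

/-- nonnegativity of the coefficients `p^{(n)}_{n−i}` for `1 ≤ i ≤ n ≤ N`. -/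
theorem pcoef_nonneg
    (α T r : ℝ) (N : ℕ) (hα0 : 0 < α) (hα1 : α < 1) (hT : 0 < T) (hr : 1 ≤ r) (hN : 0 < N)
    (n i : ℕ) (hi : 1 ≤ i) (hin : i ≤ n) (hnN : n ≤ N) :
    0 ≤ pcoef α T r N n i :=
  pcoef_nonneg_general α T r N hα0 hα1 hT hr hN n i
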